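/- arXiv:2002.09664 — 2 statements merged into one kernel-verified Lean document; each statement's English description precedes it below -/
import Mathlib

section
/- Let (Ω, F, P) be a probability space, k ∈ ℕ and w > 0 defining the time window (kw, (k+1)w]. Let f^P, f^BA : ℝ → ℕ be deterministic functions, c ∈ ℕ a target, and let τ₁, …, τᵢ and D₁, …, Dᵢ be real-valued random variables with Dₙ ≥ 0 a.s. and kw < τᵢ < (k+1)w a.s., and let γ₁, …, γ_{i−1} be random variables taking values in {0,1}. Define the admission indicator γᵢ(ω) = 1 if and only if for every t ∈ (τᵢ(ω), min(τᵢ(ω)+Dᵢ(ω), (k+1)w)] one has 1 + f^P(t) + f^BA(t) + Σ_{n=1}^{i−1} 1{τₙ(ω)+Dₙ(ω) > t}·γₙ(ω) ≤ c. Define N(ω) = Σ_{n=1}^{i−1} 1{τₙ(ω)+Dₙ(ω) > τᵢ(ω)}, and define M(ω) = max_{t ∈ (τᵢ(ω), (k+1)w]} (f^P(t)+f^BA(t)), assuming this maximum is attained for a.e. ω. Assume the events {γᵢ = 0} and {(N : ℤ) ≥ (c : ℤ) − M} are measurable. Then P(γᵢ = 0) ≤ P((N : ℤ) ≥ (c :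 ℤ) − M). -/
open MeasureTheory Finset

/-- Upper bound on the blocking probability of the `i`-th non-reserved
ride request: the probability that request `i` is blocked is at most the probability that
the number `N` of earlier requests still in service at time `τᵢ` exceeds
`c - max_{t ∈ (τᵢ, (k+1)w]} (f^P(t) + f^BA(t))`.  Here the `m = i - 1` earlier requests are
indexed by `n ∈ Finset.range m`. -/
theorem blocking_probability_upper_bound
    {Ω : Type*} [MeasurableSpace Ω] (P : Measure Ω) [IsProbabilityMeasure P]
    (k : ℕ) (w : ℝ) (hw : 0 < w)
    (fP fBA : ℝ → ℕ) (c : ℕ)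
    (m : ℕ)
    (τ D : ℕ → Ω → ℝ) (γ : ℕ → Ω → ℕ)
    (τi Di : Ω → ℝ)
    (hD : ∀ n < m, ∀ᵐ ω ∂P, 0 ≤ D n ω)
    (hDi : ∀ᵐ ω ∂P, 0 ≤ Di ω)
    (hτi : ∀ᵐ ω ∂P, (k : ℝ) * w < τi ω ∧ τi ω < ((k : ℝ) + 1) * w)
    (hγ01 : ∀ n < m, ∀ ω, γ n ω = 0 ∨ γ n ω = 1)
    (γi : Ω → ℕ)
    (hγi01 : ∀ ω, γi ω = 0 ∨ γi ω = 1)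
    (hγi : ∀ ω, γi ω = 1 ↔
      ∀ t ∈ Set.Ioc (τi ω) (min (τi ω + Di ω) (((k : ℝ) + 1) * w)),
        1 + fP t + fBA t +
          ∑ n ∈ Finset.range m, (if t < τ n ω + D n ω then γ n ω else 0) ≤ c)
    (N : Ω → ℕ)
    (hN : ∀ ω, N ω = ∑ n ∈ Finset.range m, (if τi ω < τ n ω + D n ω then 1 else 0))
    (Mx : Ω → ℕ)
    (hMx : ∀ᵐ ω ∂P,
      IsGreatest ((fun t => fP t + fBA t) '' Set.Ioc (τi ω) (((k : ℝ) + 1) * w)) (Mx ω))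
    (hmeas1 : MeasurableSet {ω | γi ω = 0})
    (hmeas2 : MeasurableSet {ω | (c : ℤ) - (Mx ω : ℤ) ≤ (N ω : ℤ)}) :
    P {ω | γi ω = 0} ≤ P {ω | (c : ℤ) - (Mx ω : ℤ) ≤ (N ω : ℤ)} := by
  refine measure_mono_ae ?_
  filter_upwards [hMx] with ω hM hω
  replace hω : γi ω = 0 := hω
  show (c : ℤ) - (Mx ω : ℤ) ≤ (N ω : ℤ)
  -- γi ω ≠ 1, so the capacity condition fails at some t
  have h0 : ¬ (γi ω = 1) := by omega
  rw [hγi] at h0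
  push_neg at h0
  obtain ⟨t, ht, hgt⟩ := h0
  have ht1 : τi ω < t := ht.1
  have ht2 : t ≤ ((k : ℝ) + 1) * w := le_trans ht.2 (min_le_right _ _)
  -- fP t + fBA t ≤ Mx ω
  have hMle : fP t + fBA t ≤ Mx ω := hM.2 ⟨t, ⟨ht1, ht2⟩, rfl⟩
  -- the sum is at most N ω
  have hsum : (∑ n ∈ Finset.range m, (if t < τ n ω + D n ω then γ n ω else 0)) ≤ N ω := by
    rw [hN]
    apply Finset.sum_le_sum
    intro n hn
    rcases hγ01 n (Finset.mem_range.mp hn) ω with h | h <;>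
      simp only [h] <;> split_ifs with h1 h2 <;> try omega
    · exact absurd (lt_trans ht1 h1) h2
  omega
end

section
/- Let k ∈ ℕ, w > 0, f^P, f^BA : ℝ → ℕ, c ∈ ℕ, and let I ∈ ℕ with arrival times kw < τ₁ ≤ τ₂ ≤ ⋯ ≤ τ_I ≤ (k+1)w and durations D₁, …, D_I ≥ 0. Define γₙ ∈ {0,1} inductively by: γₙ = 1 if and only if for every t ∈ (τₙ, min(τₙ+Dₙ, (k+1)w)], 1 + f^P(t) + f^BA(t) + Σ_{m=1}^{n−1} 1{τₘ+Dₘ > t}·γₘ ≤ c. Assume f^P(t) + f^BA(t) ≤ c for every t ∈ (kw, (k+1)w]. Then for every t ∈ (kw, (k+1)w]: f^P(t) + f^BA(t) + Σ_{n=1}^{I} γₙ · 1{τₙ < t < τₙ + Dₙ} ≤ c. -/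
open Finset

/-- Invariant of the admission control policy: if the deterministic load
`f^P(t) + f^BA(t)` never exceeds the target `c` on the window `(kw, (k+1)w]`, then under
the inductively defined admission policy the total number of active rides (previous-window,
book-ahead, and admitted non-reserved rides) never exceeds `c` on the window.
The `I` requests are indexed by `n ∈ Finset.range I`, arriving in nondecreasing order. -/
theorem admission_control_invariant
    (k : ℕ) (w : ℝ) (hw : 0 < w)
    (fP fBA : ℝ → ℕ) (c : ℕ)
    (I : ℕ) (τ D : ℕ → ℝ)
    (hτlb : ∀ n < I, (k : ℝ) * w < τ n)
    (hτub : ∀ n < I, τ n ≤ ((k : ℝ) + 1) * w)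
    (hτmono : ∀ m n, m ≤ n → n < I → τ m ≤ τ n)
    (hD : ∀ n < I, 0 ≤ D n)
    (γ : ℕ → ℕ)
    (hγ01 : ∀ n < I, γ n = 0 ∨ γ n = 1)
    (hγ : ∀ n < I, (γ n = 1 ↔
      ∀ t ∈ Set.Ioc (τ n) (min (τ n + D n) (((k : ℝ) + 1) * w)),
        1 + fP t + fBA t +
          ∑ m ∈ Finset.range n, (if t < τ m + D m then γ m else 0) ≤ c))
    (hload : ∀ t ∈ Set.Ioc ((k : ℝ) * w) (((k : ℝ) + 1) * w), fP t + fBA t ≤ c) :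
    ∀ t ∈ Set.Ioc ((k : ℝ) * w) (((k : ℝ) + 1) * w),
      fP t + fBA t +
        ∑ n ∈ Finset.range I, γ n * (if τ n < t ∧ t < τ n + D n then 1 else 0) ≤ c := by
  intro t ht
  set F := (Finset.range I).filter (fun n => γ n = 1 ∧ τ n < t ∧ t < τ n + D n) with hF
  by_cases hne : F.Nonempty
  · set N := F.max' hne with hN
    have hNF : N ∈ F := F.max'_mem hne
    have hNmem : N ∈ Finset.range I := Finset.mem_filter.mp hNF |>.1
    have hNI : N < I := Finset.mem_range.mp hNmem
    obtain ⟨hγN, hτN, htN⟩ := (Finset.mem_filter.mp hNF).2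
    -- the admission condition for N, applied at t
    have hcond := (hγ N hNI).mp hγN t ⟨hτN, le_min (le_of_lt htN) ht.2⟩
    -- sum over Ico (N+1) I is zero
    have hzero : ∀ n ∈ Finset.Ico (N+1) I,
        γ n * (if τ n < t ∧ t < τ n + D n then 1 else 0) = 0 := by
      intro n hn
      obtain ⟨hn1, hn2⟩ := Finset.mem_Ico.mp hn
      by_cases hc : τ n < t ∧ t < τ n + D n
      · rcases hγ01 n hn2 with h0 | h1
        · simp [h0]
        · exfalso
          have : n ∈ F := Finset.mem_filter.mpr ⟨Finset.mem_range.mpr hn2, h1, hc⟩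
          have := F.le_max' n this
          omega
      · simp [hc]
    have hsplit : ∑ n ∈ Finset.range I, γ n * (if τ n < t ∧ t < τ n + D n then 1 else 0)
        = ∑ n ∈ Finset.range (N+1), γ n * (if τ n < t ∧ t < τ n + D n then 1 else 0) := by
      symm
      apply Finset.sum_subset (Finset.range_subset_range.mpr hNI)
      intro n hn hn'
      exact hzero n (Finset.mem_Ico.mpr ⟨by simpa using hn', Finset.mem_range.mp hn⟩)
    have hterm : ∀ m ∈ Finset.range N,
        γ m * (if τ m < t ∧ t < τ m + D m then 1 else 0)
          ≤ (if t < τ m + D m then γ m else 0) := by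
      intro m hm
      by_cases hc : τ m < t ∧ t < τ m + D m
      · simp [hc, hc.2]
      · simp only [hc, if_false, mul_zero]
        positivity
    calc fP t + fBA t +
          ∑ n ∈ Finset.range I, γ n * (if τ n < t ∧ t < τ n + D n then 1 else 0)
        = fP t + fBA t +
          (∑ n ∈ Finset.range N, γ n * (if τ n < t ∧ t < τ n + D n then 1 else 0)
            + γ N * (if τ N < t ∧ t < τ N + D N then 1 else 0)) := by
          rw [hsplit, Finset.sum_range_succ]
      _ ≤ fP t + fBA t +
          (∑ m ∈ Finset.range N, (if t < τ m + D m then γ m else 0) + 1) := by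
          gcongr with m hm
          · exact hterm m hm
          · simp [hγN, hτN, htN]
      _ = 1 + fP t + fBA t + ∑ m ∈ Finset.range N, (if t < τ m + D m then γ m else 0) := by
          ring
      _ ≤ c := hcond
  · have hzero : ∑ n ∈ Finset.range I, γ n * (if τ n < t ∧ t < τ n + D n then 1 else 0) = 0 := by
      apply Finset.sum_eq_zero
      intro n hn
      by_cases hc : τ n < t ∧ t < τ n + D n
      · rcases hγ01 n (Finset.mem_range.mp hn) with h0 | h1
        · simp [h0]
        · exact absurd ⟨n, Finset.mem_filter.mpr ⟨hn, h1, hc⟩⟩ hne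
      · simp [hc]
    rw [hzero, add_zero]
    exact hload t ht
end
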